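/- For every n ∈ ℕ and all z: z·P_n(z) = P_{n+1}(z) + Σ_{j=0}^{n} (−1)^{n−j} · ( Π_{l=0}^{n−j−1} b_{n−l} ) · (d_j − b_j) · P_j(z), where the empty product (for j = n) equals 1. -/

import Mathlib

/-!
The polynomials satisfy the three-term relation
`z (P_{n+1} + b_{n+1} P_n) = P_{n+2} + d_{n+1} P_{n+1}`, which is checked coefficientwise: once all
Pochhammer symbols are expressed through a common few, each coefficient identity is a rational
identity in `n, k, α, β`. For `s_n := z P_n - P_{n+1}` it reads
`s_{n+1} = (d_{n+1} - b_{n+1}) P_{n+1} - b_{n+1} s_n`, with `s_0 = (d_0 - b_0) P_0` since `b_0 = 0`;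
unrolling this first-order recurrence gives the sum.
-/

open Finset

/-- Pochhammer symbol `(a)_k = a (a+1) ⋯ (a+k-1)`. -/
noncomputable def poch (a : ℝ) (k : ℕ) : ℝ := ∏ i ∈ Finset.range k, (a + (i : ℝ))

/-- The Hendriksen–van Rossum polynomial `P_n(z; α, β)`. -/
noncomputable def HR (α β : ℝ) (n : ℕ) (z : ℝ) : ℝ :=
  (poch β n / poch (α + 1) n) *
    ∑ k ∈ Finset.range (n + 1),
      poch (-(n : ℝ)) k * poch (α + 1) k /
          (poch (1 - β - (n : ℝ)) k * (Nat.factorial k : ℝ)) * z ^ k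

/-- `d_m(α,β) = −(m+β)/(m+α+1)`. -/
noncomputable def dco (α β m : ℝ) : ℝ := -(m + β) / (m + α + 1)

/-- `b_m(α,β) = −m(m+α+β)/((m+α)(m+α+1))`. -/
noncomputable def bco (α β m : ℝ) : ℝ := -(m * (m + α + β)) / ((m + α) * (m + α + 1))

lemma poch_succ (a : ℝ) (k : ℕ) : poch a (k + 1) = poch a k * (a + k) :=
  prod_range_succ _ _

lemma poch_succ' (a : ℝ) (k : ℕ) : poch a (k + 1) = a * poch (a + 1) k := by
  simp only [poch, prod_range_succ', Nat.cast_succ, Nat.cast_zero, add_zero]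
  rw [mul_comm]
  congr 1
  exact prod_congr rfl fun i _ => by ring

lemma poch_add_one {a : ℝ} (ha : a ≠ 0) (k : ℕ) : poch (a + 1) k = poch a k * (a + k) / a := by
  rw [← poch_succ, poch_succ', mul_div_cancel_left₀ _ ha]

lemma poch_neg_natCast_of_lt {n k : ℕ} (h : n < k) : poch (-n) k = 0 :=
  prod_eq_zero (mem_range.2 h) (neg_add_cancel _)

noncomputable def hrCoeff (α β : ℝ) (n k : ℕ) : ℝ :=
  poch β n / poch (α + 1) n *
    (poch (-(n : ℝ)) k * poch (α + 1) k / (poch (1 - β - (n : ℝ)) k * (Nat.factorial k : ℝ)))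

lemma hrCoeff_zero_right (α β : ℝ) (n : ℕ) : hrCoeff α β n 0 = poch β n / poch (α + 1) n := by
  simp [hrCoeff, poch]

lemma hrCoeff_of_lt (α β : ℝ) {n k : ℕ} (h : n < k) : hrCoeff α β n k = 0 := by
  simp [hrCoeff, poch_neg_natCast_of_lt h]

lemma HR_eq_sum_hrCoeff (α β : ℝ) {n m : ℕ} (h : n < m) (z : ℝ) :
    HR α β n z = ∑ k ∈ range m, hrCoeff α β n k * z ^ k := by
  rw [← sum_range_add_sum_Ico (fun k => hrCoeff α β n k * z ^ k) h,
    sum_eq_zero (s := Ico (n + 1) m) fun k hk => by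
      rw [hrCoeff_of_lt α β (mem_Ico.1 hk).1, zero_mul],
    add_zero, HR, mul_sum]
  exact sum_congr rfl fun k _ => by rw [hrCoeff]; ring

section
variable {α β : ℝ}

lemma hrCoeff_succ_add_bco (hα : ∀ m : ℤ, α ≠ m) (hβ : ∀ m : ℤ, β ≠ m) (n k : ℕ) :
    hrCoeff α β (n + 1) k + bco α β (n + 1) * hrCoeff α β n k
      = hrCoeff α β (n + 2) (k + 1) + dco α β (n + 1) * hrCoeff α β (n + 1) (k + 1) := by
  have hn : -((n : ℝ) + 1) ≠ 0 := neg_ne_zero.2 (by positivity)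
  have hα₁ : α + 1 + n ≠ 0 := fun h => hα (-(n + 1 : ℕ)) (by push_cast; linarith)
  have hα₂ : α + 1 + (n + 1) ≠ 0 := fun h => hα (-(n + 2 : ℕ)) (by push_cast; linarith)
  have hα₁' : n + 1 + α ≠ 0 := fun h => hα (-(n + 1 : ℕ)) (by push_cast; linarith)
  have hα₂' : n + 1 + α + 1 ≠ 0 := fun h => hα (-(n + 2 : ℕ)) (by push_cast; linarith)
  have hβ₁ : 1 - β - (n + 1) ≠ 0 := fun h => hβ (-n) (by push_cast; linarith)
  have hβ₂ : 1 - β - (n + 2) ≠ 0 := fun h => hβ (-n - 1) (by push_cast; linarith)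
  have hβ₃ : 1 - β - (n + 1) + k ≠ 0 := fun h => hβ (k - n) (by push_cast; linarith)
  -- express every Pochhammer symbol through `(-n-1)_k`, `(-β-n)_k`, `(α+1)_k`, `(β)_n`, `(α+1)_n`
  have e1 : poch (-((n : ℝ) + 2)) (k + 1) = -((n : ℝ) + 2) * poch (-((n : ℝ) + 1)) k := by
    rw [poch_succ']; ring_nf
  have e2 : poch (-(n : ℝ)) k
      = poch (-((n : ℝ) + 1)) k * (-((n : ℝ) + 1) + k) / -((n : ℝ) + 1) := by
    rw [← poch_add_one hn]; ring_nf
  have e3 : poch (1 - β - ((n : ℝ) + 2)) (k + 1)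
      = (1 - β - ((n : ℝ) + 2)) * poch (1 - β - ((n : ℝ) + 1)) k := by
    rw [poch_succ']; ring_nf
  have e4 : poch (1 - β - n) k
      = poch (1 - β - ((n : ℝ) + 1)) k * (1 - β - ((n : ℝ) + 1) + k) / (1 - β - ((n : ℝ) + 1)) := by
    rw [← poch_add_one hβ₁]; ring_nf
  simp only [hrCoeff, bco, dco, Nat.factorial_succ]
  push_cast
  rw [e1, e2, e3, e4]
  simp only [poch_succ _ k, poch_succ _ n, poch_succ _ (n + 1)]
  push_cast
  field_simp
  ring

lemma hrCoeff_succ_zero_add_dco (hα : ∀ m : ℤ, α ≠ m) (n : ℕ) :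
    hrCoeff α β (n + 1) 0 + dco α β n * hrCoeff α β n 0 = 0 := by
  have hα₁ : α + 1 + n ≠ 0 := fun h => hα (-(n + 1 : ℕ)) (by push_cast; linarith)
  have hα₁' : n + α + 1 ≠ 0 := fun h => hα (-(n + 1 : ℕ)) (by push_cast; linarith)
  rw [hrCoeff_zero_right, hrCoeff_zero_right, poch_succ, poch_succ, dco]
  field_simp
  ring

lemma mul_HR_succ_add_bco (hα : ∀ m : ℤ, α ≠ m) (hβ : ∀ m : ℤ, β ≠ m) (n : ℕ) (z : ℝ) :
    z * (HR α β (n + 1) z + bco α β (n + 1) * HR α β n z)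
      = HR α β (n + 2) z + dco α β (n + 1) * HR α β (n + 1) z := by
  calc z * (HR α β (n + 1) z + bco α β (n + 1) * HR α β n z)
      = ∑ k ∈ range (n + 2),
          (hrCoeff α β (n + 1) k + bco α β (n + 1) * hrCoeff α β n k) * z ^ (k + 1) := by
        rw [HR_eq_sum_hrCoeff α β (m := n + 2) (by omega),
          HR_eq_sum_hrCoeff α β (m := n + 2) (by omega)]
        simp only [mul_add, mul_sum, ← sum_add_distrib]
        exact sum_congr rfl fun k _ => by ring
    _ = ∑ k ∈ range (n + 2),
          (hrCoeff α β (n + 2) (k + 1) + dco α β (n + 1) * hrCoeff α β (n + 1) (k + 1))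
            * z ^ (k + 1) :=
        sum_congr rfl fun k _ => by rw [hrCoeff_succ_add_bco hα hβ]
    _ = ∑ k ∈ range (n + 3),
          (hrCoeff α β (n + 2) k + dco α β (n + 1) * hrCoeff α β (n + 1) k) * z ^ k := by
        rw [sum_range_succ' _ (n + 2), ← Nat.cast_succ, hrCoeff_succ_zero_add_dco hα, zero_mul,
          add_zero]
    _ = HR α β (n + 2) z + dco α β (n + 1) * HR α β (n + 1) z := by
        rw [HR_eq_sum_hrCoeff α β (m := n + 3) (by omega),
          HR_eq_sum_hrCoeff α β (m := n + 3) (by omega), mul_sum, ← sum_add_distrib]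
        exact sum_congr rfl fun k _ => by ring

end

lemma mul_HR_zero {α β : ℝ} (hα : α + 1 ≠ 0) (hβ : β ≠ 0) (z : ℝ) :
    z * HR α β 0 z = HR α β 1 z + dco α β 0 * HR α β 0 z := by
  simp only [HR, poch, dco, range_zero, prod_empty, ne_eq, one_ne_zero, not_false_eq_true,
    div_self, zero_add, range_one, CharP.cast_eq_zero, neg_zero, sub_zero, sum_singleton, mul_one,
    Nat.factorial_zero, Nat.cast_one, pow_zero, prod_singleton, add_zero, Nat.reduceAdd,
    sub_sub_cancel_left, sum_range_succ, neg_mul, one_mul, neg_add_rev, Nat.factorial_one, pow_one]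
  field_simp
  ring

theorem eq_sum_of_eq_sub_mul {R : Type*} [CommRing R] {b : R → R} {c s : ℕ → R}
    (h0 : s 0 = c 0) (hs : ∀ n : ℕ, s (n + 1) = c (n + 1) - b (n + 1) * s n) (n : ℕ) :
    s n = ∑ j ∈ range (n + 1), (-1) ^ (n - j) * (∏ l ∈ range (n - j), b (n - l)) * c j := by
  induction n with
  | zero => simp [h0]
  | succ n ih =>
    rw [hs, ih, sum_range_succ _ (n + 1), mul_sum, Nat.sub_self, sub_eq_add_neg, ← sum_neg_distrib]
    simp only [pow_zero, range_zero, prod_empty, one_mul, add_comm (c (n + 1))]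
    congr 1
    refine sum_congr rfl fun j hj => ?_
    rw [Nat.sub_add_comm (Nat.lt_succ_iff.1 (mem_range.1 hj)), pow_succ, prod_range_succ']
    push_cast
    simp only [sub_zero, add_sub_add_right_eq_sub]
    ring

theorem stmt10_general (α β : ℝ)
    (hα : ∀ m : ℤ, α ≠ (m : ℝ)) (hβ : ∀ m : ℤ, β ≠ (m : ℝ))
    (n : ℕ) (z : ℝ) :
    z * HR α β n z
      = HR α β (n + 1) z
        + ∑ j ∈ Finset.range (n + 1),
            (-1 : ℝ) ^ (n - j) * (∏ l ∈ Finset.range (n - j), bco α β ((n : ℝ) - (l : ℝ)))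
              * (dco α β (j : ℝ) - bco α β (j : ℝ)) * HR α β j z := by
  have hsum := eq_sum_of_eq_sub_mul (b := bco α β)
    (s := fun n => z * HR α β n z - HR α β (n + 1) z)
    (c := fun j => (dco α β j - bco α β j) * HR α β j z) ?_ ?_ n
  · simp only [← mul_assoc] at hsum
    linear_combination hsum
  · have hb0 : bco α β 0 = 0 := by simp [bco]
    simp only [Nat.cast_zero, hb0, sub_zero]
    have hα₁ : α + 1 ≠ 0 := fun h => hα (-1) (by push_cast; linarith)
    linear_combination mul_HR_zero hα₁ (by exact_mod_cast hβ 0) z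
  · intro n
    push_cast
    linear_combination mul_HR_succ_add_bco hα hβ n z

/-- `z P_n(z) = P_{n+1}(z) + Σ_{j=0}^{n} (−1)^{n−j} (Π_{l=0}^{n−j−1} b_{n−l}) (d_j − b_j) P_j(z)`. -/
theorem stmt10 (α β : ℝ)
    (hα : ∀ m : ℤ, α ≠ (m : ℝ)) (hβ : ∀ m : ℤ, β ≠ (m : ℝ))
    (hαβ : ∀ m : ℤ, α + β ≠ (m : ℝ))
    (n : ℕ) (z : ℝ) :
    z * HR α β n z
      = HR α β (n + 1) z
        + ∑ j ∈ Finset.range (n + 1),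
            (-1 : ℝ) ^ (n - j) * (∏ l ∈ Finset.range (n - j), bco α β ((n : ℝ) - (l : ℝ)))
              * (dco α β (j : ℝ) - bco α β (j : ℝ)) * HR α β j z :=
  stmt10_general α β hα hβ n z
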